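/- There exists a finite set C ⊆ 𝔽₂^24 with |C| = 759 such that every element of C has Hamming weight exactly 8 and any two distinct elements of C have Hamming distance at least 8 (equivalently, the supports of any two distinct elements intersect in at most 4 coordinates). Moreover, there exists a 12-dimensional 𝔽₂-linear subspace L of 𝔽₂^24 (the extended binary Golay code) such that C is exactly the set of weight-8 elements of L and any two distinct elements of L have Hamming distance at least 8. -/

import Mathlib

/-!
The extended Golay code is the row space of a generator matrix `[I | A]`, with `A` the bordered
back-circulant of the quadratic residues mod 11. Writing vectors of `𝔽₂^24` as 24-bit integers, so that addition becomes `xor`, the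
kernel runs through all `2^12` codewords and checks that every nonzero one has weight at least 8
and that exactly 759 have weight 8. Minimum weight 8 makes the encoder injective, so the code has
dimension 12, and it bounds distances because `d(x, y)` is the weight of `y - x`.
-/

open Finset

namespace GolayCode

section Bits

variable {k : ℕ}

def ofBits (k m : ℕ) : Fin k → ZMod 2 := fun j => if m.testBit j then 1 else 0

theorem ofBits_zero : ofBits k 0 = 0 := by
  funext j
  simp [ofBits]

theorem ofBits_xor (a b : ℕ) : ofBits k (a ^^^ b) = ofBits k a + ofBits k b := by
  funext j
  simp only [ofBits, Nat.testBit_xor, Pi.add_apply]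
  cases a.testBit j <;> cases b.testBit j <;> decide

theorem card_filter_univ_fin_eq_countP_range (p : ℕ → Prop) [DecidablePred p] :
    #(univ.filter fun j : Fin k => p j) = (List.range k).countP (p ·) := by
  rw [card_filter, Fin.sum_univ_eq_sum_range (if p · then 1 else 0), ← card_filter, card_def,
    filter_val, range_val, ← Multiset.coe_range, Multiset.filter_coe, Multiset.coe_card,
    List.countP_eq_length_filter]

def bitWeight (k m : ℕ) : ℕ := (List.range k).countP m.testBit

theorem hammingNorm_ofBits (m : ℕ) : hammingNorm (ofBits k m) = bitWeight k m := by
  have supp : (univ.filter fun j => ofBits k m j ≠ 0) =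
      univ.filter fun j : Fin k => m.testBit j := by
    ext j
    simp [ofBits]
  rw [hammingNorm, supp, card_filter_univ_fin_eq_countP_range (m.testBit · = true), bitWeight]
  simp only [Bool.decide_eq_true]

-- `ZMod 2` is `Fin 2` by definition.
def bitsEquiv (k : ℕ) : Fin (2 ^ k) ≃ (Fin k → ZMod 2) := finFunctionFinEquiv.symm

theorem bitsEquiv_apply (n : Fin (2 ^ k)) : bitsEquiv k n = ofBits k n := by
  funext j
  apply ZMod.val_injective
  change (finFunctionFinEquiv.symm n j : Fin 2).val = _
  rw [finFunctionFinEquiv_symm_apply_val, ofBits, Nat.testBit_eq_decide_div_mod_eq]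
  rcases Nat.mod_two_eq_zero_or_one (n / 2 ^ (j : ℕ)) with h | h <;> simp [h, ZMod.val_one]

end Bits

def xorComb : (k : ℕ) → (Fin k → ℕ) → ℕ → ℕ
  | 0, _, _ => 0
  | k + 1, ms, n =>
    xorComb k (ms ∘ Fin.castSucc) n ^^^ (if n.testBit k then ms (Fin.last k) else 0)

theorem ofBits_xorComb (w k : ℕ) (ms : Fin k → ℕ) (n : ℕ) :
    ofBits w (xorComb k ms n) =
      Fintype.linearCombination (ZMod 2) (ofBits w ∘ ms) (ofBits k n) := by
  induction k with
  | zero => simp [xorComb, ofBits_zero, Fintype.linearCombination_apply]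
  | succ k ih =>
    rw [xorComb, ofBits_xor, ih, Fintype.linearCombination_apply,
      Fintype.linearCombination_apply, Fin.sum_univ_castSucc]
    congr 1
    by_cases h : n.testBit k <;> simp [ofBits, ofBits_zero, h]

theorem le_hammingDist_of_le_hammingNorm {ι : Type*} [Fintype ι] {β : ι → Type*}
    [∀ i, AddGroup (β i)] [∀ i, DecidableEq (β i)] {L : AddSubgroup (∀ i, β i)} {d : ℕ}
    (hL : ∀ x ∈ L, x ≠ 0 → d ≤ hammingNorm x) {x y : ∀ i, β i} (hx : x ∈ L) (hy : y ∈ L)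
    (hxy : x ≠ y) : d ≤ hammingDist x y := by
  rw [hammingDist_eq_hammingNorm]
  exact hL _ (L.add_mem (L.neg_mem hx) hy) fun h => hxy (neg_add_eq_zero.1 h)

/-- Row `i` is `eᵢ` followed by row `i` of the bordered matrix whose entry `(i, j)`, for
`i, j < 11`, is `1` unless `i + j` is a nonzero square mod 11; bit `j` of a mask is coordinate `j`. -/
def golayMasks : Fin 12 → ℕ :=
  ![14438401, 15605762, 11997188, 14385160, 11386896, 9887776,
    9138240, 12955776, 14864640, 15819264, 12104704, 8386560]

def golayEncode : (Fin 12 → ZMod 2) →ₗ[ZMod 2] (Fin 24 → ZMod 2) :=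
  Fintype.linearCombination (ZMod 2) (ofBits 24 ∘ golayMasks)

def golayCode : Submodule (ZMod 2) (Fin 24 → ZMod 2) := LinearMap.range golayEncode

theorem golayEncode_ofBits (n : ℕ) :
    golayEncode (ofBits 12 n) = ofBits 24 (xorComb 12 golayMasks n) :=
  (ofBits_xorComb 24 12 golayMasks n).symm

theorem eight_le_bitWeight_golay {n : ℕ} (hn : n < 2 ^ 12) (h0 : n ≠ 0) :
    8 ≤ bitWeight 24 (xorComb 12 golayMasks n) := by
  -- `List.all` avoids the deep kernel recursion of `Nat.decidableBallLT` on `∀ n < 2 ^ 12`.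
  have hall : (List.range (2 ^ 12)).all
      (fun n => n = 0 || 8 ≤ bitWeight 24 (xorComb 12 golayMasks n)) := by
    decide +kernel
  simpa [h0] using List.all_eq_true.1 hall n (List.mem_range.2 hn)

theorem countP_bitWeight_golay_eq_eight :
    (List.range (2 ^ 12)).countP
      (fun n => bitWeight 24 (xorComb 12 golayMasks n) = 8) = 759 := by
  decide +kernel

theorem eight_le_hammingNorm_golayEncode {v : Fin 12 → ZMod 2} (hv : v ≠ 0) :
    8 ≤ hammingNorm (golayEncode v) := by
  obtain ⟨n, rfl⟩ := (bitsEquiv 12).surjective v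
  rw [bitsEquiv_apply] at hv ⊢
  rw [golayEncode_ofBits, hammingNorm_ofBits]
  exact eight_le_bitWeight_golay n.isLt fun h => hv (by rw [h, ofBits_zero])

theorem golayEncode_injective : Function.Injective golayEncode := by
  rw [← LinearMap.ker_eq_bot, LinearMap.ker_eq_bot']
  intro v hv
  by_contra hv0
  have := eight_le_hammingNorm_golayEncode hv0
  rw [hv, hammingNorm_zero] at this
  omega

theorem finrank_golayCode : Module.finrank (ZMod 2) golayCode = 12 := by
  rw [golayCode, LinearMap.finrank_range_of_inj golayEncode_injective, Module.finrank_fin_fun]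

theorem eight_le_hammingNorm_of_mem_golayCode {x : Fin 24 → ZMod 2} (hx : x ∈ golayCode)
    (hx0 : x ≠ 0) : 8 ≤ hammingNorm x := by
  obtain ⟨v, rfl⟩ := hx
  exact eight_le_hammingNorm_golayEncode fun hv => hx0 (by rw [hv, map_zero])

def golayOctads : Finset (Fin 24 → ZMod 2) :=
  (univ.filter fun v => hammingNorm (golayEncode v) = 8).map ⟨golayEncode, golayEncode_injective⟩

theorem mem_golayOctads {x : Fin 24 → ZMod 2} :
    x ∈ golayOctads ↔ x ∈ golayCode ∧ hammingNorm x = 8 := by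
  simp only [golayOctads, mem_map, mem_filter, mem_univ, true_and, Function.Embedding.coeFn_mk,
    golayCode, LinearMap.mem_range]
  constructor
  · rintro ⟨v, hv, rfl⟩
    exact ⟨⟨v, rfl⟩, hv⟩
  · rintro ⟨⟨v, rfl⟩, hv⟩
    exact ⟨v, hv, rfl⟩

theorem card_golayOctads : #golayOctads = 759 := by
  rw [golayOctads, card_map, ← map_univ_equiv (bitsEquiv 12), filter_map, card_map]
  simp only [Function.comp_def, Equiv.coe_toEmbedding, bitsEquiv_apply, golayEncode_ofBits,
    hammingNorm_ofBits]
  rw [card_filter_univ_fin_eq_countP_range (fun n => bitWeight 24 (xorComb 12 golayMasks n) = 8)]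
  exact countP_bitWeight_golay_eq_eight

end GolayCode

open GolayCode in
theorem exists_steiner_and_golay :
    ∃ C : Finset (Fin 24 → ZMod 2),
      C.card = 759 ∧
      (∀ c ∈ C, hammingNorm c = 8) ∧
      (∀ c ∈ C, ∀ c' ∈ C, c ≠ c' → 8 ≤ hammingDist c c') ∧
      ∃ L : Submodule (ZMod 2) (Fin 24 → ZMod 2),
        Module.finrank (ZMod 2) L = 12 ∧
        (↑C : Set (Fin 24 → ZMod 2)) = {x | x ∈ L ∧ hammingNorm x = 8} ∧
        (∀ x ∈ L, ∀ y ∈ L, x ≠ y → 8 ≤ hammingDist x y) := by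
  have golay_dist : ∀ x ∈ golayCode, ∀ y ∈ golayCode, x ≠ y → 8 ≤ hammingDist x y :=
    fun x hx y hy => le_hammingDist_of_le_hammingNorm (L := golayCode.toAddSubgroup)
      (fun _ => eight_le_hammingNorm_of_mem_golayCode) hx hy
  refine ⟨golayOctads, card_golayOctads, fun c hc => (mem_golayOctads.1 hc).2,
    fun c hc c' hc' => golay_dist c (mem_golayOctads.1 hc).1 c' (mem_golayOctads.1 hc').1,
    golayCode, finrank_golayCode, Set.ext fun _ => mem_golayOctads, golay_dist⟩
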